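/- With Z ∈ ℝ^{D×F}, Z† Z = I_F, m, n ∈ ℝ^D, r = m − Z Z† m ≠ 0, b = r/‖r‖², define K = Z_f Z† for some Z_f ∈ ℝ^{D×F}, and define the augmented matrices Z₊ = [Z | m], Z_f₊ = [Z_f | n], with Z₊† the block left inverse (top block Z†(I − m bᵀ), bottom row bᵀ). Then the updated operator satisfies K₊ := Z_f₊ Z₊† = K + (n − K m) bᵀ. -/

import Mathlib

open Matrix

/-- Append a column `m` to the matrix `Z`. -/
def appendCol {D F : ℕ} (Z : Matrix (Fin D) (Fin F) ℝ) (m : Fin D → ℝ) :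
    Matrix (Fin D) (Fin (F + 1)) ℝ :=
  Matrix.of fun i => Fin.snoc (Z i) (m i)

lemma appendCol_mul_of_snoc {D E F : ℕ} (A : Matrix (Fin D) (Fin F) ℝ) (v : Fin D → ℝ)
    (B : Matrix (Fin F) (Fin E) ℝ) (w : Fin E → ℝ) :
    appendCol A v * Matrix.of (Fin.snoc B w) = A * B + vecMulVec v w := by
  ext i j
  simp [mul_apply, appendCol, Fin.sum_univ_castSucc, vecMulVec_apply, Fin.snoc]

theorem stmt2_general (D F : ℕ) (Zf : Matrix (Fin D) (Fin F) ℝ) (Zd : Matrix (Fin F) (Fin D) ℝ)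
    (m n : Fin D → ℝ)
    (b : Fin D → ℝ)
    (K : Matrix (Fin D) (Fin D) ℝ) (hK : K = Zf * Zd)
    (W : Matrix (Fin (F + 1)) (Fin D) ℝ)
    (hW : W = Matrix.of (Fin.snoc (Zd * (1 - Matrix.vecMulVec m b)) b)) :
    appendCol Zf n * W = K + Matrix.vecMulVec (n - K.mulVec m) b := by
  subst hK
  calc appendCol Zf n * W
      = Zf * (Zd * (1 - vecMulVec m b)) + vecMulVec n b := hW ▸ appendCol_mul_of_snoc ..
    _ = Zf * Zd + vecMulVec (n - (Zf * Zd) *ᵥ m) b := by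
      rw [← Matrix.mul_assoc, Matrix.mul_sub, Matrix.mul_one, mul_vecMulVec, sub_vecMulVec]
      abel

theorem stmt2 (D F : ℕ) (Z Zf : Matrix (Fin D) (Fin F) ℝ) (Zd : Matrix (Fin F) (Fin D) ℝ)
    (hZ : Zd * Z = 1) (m n : Fin D → ℝ)
    (r : Fin D → ℝ) (hr : r = m - Z.mulVec (Zd.mulVec m)) (hr0 : r ≠ 0)
    (b : Fin D → ℝ) (hb : b = (r ⬝ᵥ r)⁻¹ • r)
    (K : Matrix (Fin D) (Fin D) ℝ) (hK : K = Zf * Zd)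
    (W : Matrix (Fin (F + 1)) (Fin D) ℝ)
    (hW : W = Matrix.of (Fin.snoc (Zd * (1 - Matrix.vecMulVec m b)) b)) :
    appendCol Zf n * W = K + Matrix.vecMulVec (n - K.mulVec m) b :=
  stmt2_general D F Zf Zd m n b K hK W hW
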